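/- Let n ≥ 3 and let Dj_n = (C_n □ P_2) + K_1 be the djembe graph obtained by joining the corresponding vertices of two disjoint cycles of order n and joining all vertices of both cycles to one external vertex. Then the chromatic compound curling number of Dj_n equals n² if n is even and 2(n−1)² if n is odd. -/

import Mathlib

open SimpleGraph Finset

/-- A proper vertex colouring of `G` with colour set `Fin k`. -/
def IsProperColoring {V : Type*} (G : SimpleGraph V) {k : ℕ} (C : V → Fin k) : Prop :=
  ∀ ⦃v w⦄, G.Adj v w → C v ≠ C w

/-- The chromatic number of `G`, as a natural number. -/
noncomputable def chi {V : Type*} (G : SimpleGraph V) : ℕ :=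
  G.chromaticNumber.toNat

/-- θ(cᵢ): the number of vertices receiving colour `i` under the colouring `C`. -/
def theta {V : Type*} [Fintype V] {k : ℕ} (C : V → Fin k) (i : Fin k) : ℕ :=
  (Finset.univ.filter fun v => C v = i).card

/-- The list of colour class sizes of `C`, sorted in descending order. -/
def classSizesDesc {V : Type*} [Fintype V] {k : ℕ} (C : V → Fin k) : List ℕ :=
  (List.insertionSort (· ≤ ·) (List.ofFn fun i => theta C i)).reverse

/-- A χ⁻-colouring of `G`: a proper colouring with exactly χ(G) colours such that,
greedily, the colour class of `c₁` is as large as possible, then the colour class of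
`c₂` is as large as possible among the remaining vertices, and so on; equivalently,
the descending sequence of colour class sizes is lexicographically maximal among
all proper colourings with χ(G) colours. -/
def IsChiMinusColoring {V : Type*} [Fintype V] (G : SimpleGraph V)
    (C : V → Fin (chi G)) : Prop :=
  IsProperColoring G C ∧
    ∀ C' : V → Fin (chi G), IsProperColoring G C' →
      ¬ List.Lex (· < ·) (classSizesDesc C) (classSizesDesc C')

/-- The djembe graph `Djₙ = (Cₙ □ P₂) + K₁`: two disjoint cycles of order `n`
(the vertices `some (v, false)` and `some (v, true)`), with corresponding vertices
joined, and every cycle vertex joined to an external central vertex `none`. -/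
def djembeG (n : ℕ) : SimpleGraph (Option (Fin n × Bool)) :=
  SimpleGraph.fromRel (fun a b =>
    match a, b with
    | some (v, i), some (w, j) => (i = j ∧ w.val = (v.val + 1) % n) ∨ (i ≠ j ∧ w = v)
    | none, some _ => True
    | _, _ => False)

lemma dj_adj_none {n : ℕ} (p : Fin n × Bool) : (djembeG n).Adj none (some p) := by
  rw [djembeG, SimpleGraph.fromRel_adj]
  exact ⟨by simp, Or.inl trivial⟩
lemma dj_adj_rung {n : ℕ} (v : Fin n) (b : Bool) :
    (djembeG n).Adj (some (v, b)) (some (v, !b)) := by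
  rw [djembeG, SimpleGraph.fromRel_adj]
  exact ⟨by simp, Or.inl (Or.inr ⟨by simp, rfl⟩)⟩
lemma dj_adj_cycle {n : ℕ} (hn : 3 ≤ n) (v w : Fin n) (b : Bool)
    (hw : w.val = (v.val + 1) % n) :
    (djembeG n).Adj (some (v, b)) (some (w, b)) := by
  rw [djembeG, SimpleGraph.fromRel_adj]
  have hv := v.isLt
  have hne : w.val ≠ v.val := by
    rw [hw]
    rcases Nat.lt_or_ge (v.val + 1) n with h | h
    · rw [Nat.mod_eq_of_lt h]; omega
    · have h' : v.val + 1 = n := by omega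
      rw [h', Nat.mod_self]; omega
  refine ⟨by simp [Fin.ext_iff]; omega, Or.inl (Or.inl ⟨rfl, hw⟩)⟩

/-- Sufficient conditions for a proper colouring of the djembe graph. -/
lemma dj_proper_of {n k : ℕ} (C : Option (Fin n × Bool) → Fin k)
    (h1 : ∀ p, C none ≠ C (some p))
    (h2 : ∀ v b, C (some (v, b)) ≠ C (some (v, !b)))
    (h3 : ∀ (v w : Fin n) (b : Bool), w.val = (v.val + 1) % n →
      C (some (v, b)) ≠ C (some (w, b))) :
    IsProperColoring (djembeG n) C := by
  have key : ∀ (v w : Fin n) (i j : Bool),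
      ((i = j ∧ w.val = (v.val + 1) % n) ∨ (i ≠ j ∧ w = v)) →
      C (some (v, i)) ≠ C (some (w, j)) := by
    rintro v w i j (⟨rfl, hw⟩ | ⟨hij, hw⟩)
    · exact h3 v w i hw
    · have hji : j = !i := by cases i <;> cases j <;> simp_all
      subst hji; rw [hw]; exact h2 v i
  intro a b hadj
  rw [djembeG, SimpleGraph.fromRel_adj] at hadj
  obtain ⟨hne, h⟩ := hadj
  rcases a with _ | ⟨v, i⟩ <;> rcases b with _ | ⟨w, j⟩
  · exact absurd h (by simp)
  · exact h1 (w, j)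
  · rcases h with h | h
    · exact h.elim
    · exact (h1 (v, i)).symm
  · rcases h with h | h
    · exact key v w i j h
    · exact (key w v j i h).symm
lemma chi_eq {V : Type*} (G : SimpleGraph V) (k : ℕ) (hk : 1 ≤ k)
    (h1 : G.Colorable k) (h2 : ¬ G.Colorable (k-1)) : chi G = k := by
  have hle := h1.chromaticNumber_le
  have hgt : ((k-1 : ℕ) : ℕ∞) < G.chromaticNumber := by
    by_contra h
    exact h2 (SimpleGraph.chromaticNumber_le_iff_colorable.mp (not_lt.mp h))
  have h3 : ((k:ℕ) : ℕ∞) ≤ G.chromaticNumber := by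
    have := Order.add_one_le_of_lt hgt
    calc ((k:ℕ) : ℕ∞) = ((k-1:ℕ):ℕ∞) + 1 := by norm_cast; omega
      _ ≤ _ := this
  have : G.chromaticNumber = (k : ℕ∞) := le_antisymm hle h3
  rw [chi, this, ENat.toNat_coe]
lemma no_alt (g : ℕ → Bool) (h : ∀ k, g (k+1) = !g k) {n : ℕ} (ho : Odd n)
    (hper : g n = g 0) : False := by
  have key : ∀ k, g k = xor (decide (k % 2 = 1)) (g 0) := by
    intro k; induction k with
    | zero => simp
    | succ k ih =>
      rw [h k, ih]
      rcases Nat.mod_two_eq_zero_or_one k with hk | hk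
      · have h1 : (k+1) % 2 = 1 := by omega
        simp [hk, h1]
      · have h1 : (k+1) % 2 = 0 := by omega
        simp [hk, h1]
  have hn1 : n % 2 = 1 := Nat.odd_iff.mp ho
  have hkey := key n
  rw [hper] at hkey
  simp [hn1] at hkey
def ceV (n : ℕ) : Option (Fin n × Bool) → Fin 3 :=
  fun a => match a with
  | none => ⟨2, by omega⟩
  | some (v, b) => ⟨(v.val + b.toNat) % 2, by omega⟩
lemma ce_proper {n : ℕ} (hn : 3 ≤ n) (he : Even n) :
    IsProperColoring (djembeG n) (ceV n) := by
  have hne : n % 2 = 0 := Nat.even_iff.mp he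
  apply dj_proper_of
  · rintro ⟨v, b⟩; simp only [ceV, ne_eq, Fin.mk.injEq]; omega
  · intro v b; cases b <;> simp only [ceV, ne_eq, Fin.mk.injEq, Bool.toNat] <;> simp <;> omega
  · intro v w b hw
    have hv := v.isLt
    have hwlt := w.isLt
    have hw' : w.val = v.val + 1 ∨ (w.val = 0 ∧ v.val = n - 1) := by
      rcases Nat.lt_or_ge (v.val + 1) n with h | h
      · left; rw [hw, Nat.mod_eq_of_lt h]
      · right; have h' : v.val + 1 = n := by omega
        constructor
        · rw [hw, h', Nat.mod_self]
        · omega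
    simp only [ceV, ne_eq, Fin.mk.injEq]
    cases b <;> simp only [Bool.toNat_false, Bool.toNat_true] <;> omega
lemma not_col2 {n : ℕ} (hn : 3 ≤ n) : ¬ (djembeG n).Colorable 2 := by
  rintro ⟨c⟩
  have h0 : (0:ℕ) < n := by omega
  have t1 := c.valid (dj_adj_none (⟨0, h0⟩, false))
  have t2 := c.valid (dj_adj_none (⟨0, h0⟩, true))
  have t3 := c.valid (dj_adj_rung ⟨0, h0⟩ false)
  have key : ∀ a b d : Fin 2, a ≠ b → a ≠ d → b ≠ d → False := by decide
  exact key _ _ _ t1 t2 t3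
lemma chi_even {n : ℕ} (hn : 3 ≤ n) (he : Even n) : chi (djembeG n) = 3 :=
  chi_eq _ 3 (by norm_num) ⟨SimpleGraph.Coloring.mk (ceV n) (fun h => ce_proper hn he h)⟩
    (not_col2 hn)
def coV (n : ℕ) : Option (Fin n × Bool) → Fin 4
  | none => ⟨3, by omega⟩
  | some (v, false) =>
    if v.val = n - 1 then ⟨2, by omega⟩ else ⟨v.val % 2, by omega⟩
  | some (v, true) =>
    if v.val = n - 2 then ⟨2, by omega⟩
    else if v.val = n - 1 then ⟨0, by omega⟩
    else ⟨(v.val + 1) % 2, by omega⟩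
lemma co_proper {n : ℕ} (hn : 3 ≤ n) :
    IsProperColoring (djembeG n) (coV n) := by
  apply dj_proper_of
  · rintro ⟨v, b⟩
    have hv := v.isLt
    cases b <;> simp only [coV] <;> split_ifs <;>
      simp only [ne_eq, Fin.mk.injEq] <;> omega
  · intro v b
    have hv := v.isLt
    cases b <;> simp only [coV, Bool.not_false, Bool.not_true] <;> split_ifs <;>
      simp only [ne_eq, Fin.mk.injEq] <;> omega
  · intro v w b hw
    have hv := v.isLt
    have hwlt := w.isLt
    have hw' : w.val = v.val + 1 ∨ (w.val = 0 ∧ v.val = n - 1) := by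
      rcases Nat.lt_or_ge (v.val + 1) n with h | h
      · left; rw [hw, Nat.mod_eq_of_lt h]
      · right; have h' : v.val + 1 = n := by omega
        constructor
        · rw [hw, h', Nat.mod_self]
        · omega
    cases b <;> simp only [coV] <;> split_ifs <;>
      simp only [ne_eq, Fin.mk.injEq] <;> omega
lemma not_col3 {n : ℕ} (hn : 3 ≤ n) (ho : Odd n) : ¬ (djembeG n).Colorable 3 := by
  rintro ⟨c⟩
  have hnpos : 0 < n := by omega
  set z : Fin 3 := c none with hz
  have hb : ∀ v : Fin n, c (some (v, false)) ≠ z :=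
    fun v => (c.valid (dj_adj_none (v, false))).symm
  have hdiff : ∀ k : ℕ,
      c (some (⟨(k+1) % n, Nat.mod_lt _ hnpos⟩, false)) ≠
        c (some (⟨k % n, Nat.mod_lt _ hnpos⟩, false)) := by
    intro k
    have hadj := dj_adj_cycle hn ⟨k % n, Nat.mod_lt _ hnpos⟩ ⟨(k+1) % n, Nat.mod_lt _ hnpos⟩
      false (by simp [Nat.mod_add_mod])
    exact (c.valid hadj).symm
  have key : ∀ z a b : Fin 3, a ≠ z → b ≠ z → b ≠ a →
      (decide (b = z + 1) = !decide (a = z + 1)) := by decide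
  refine no_alt (fun k => decide (c (some (⟨k % n, Nat.mod_lt _ hnpos⟩, false)) = z + 1))
    (fun k => key z _ _ (hb _) (hb _) (hdiff k)) ho ?_
  have hmk : (⟨n % n, Nat.mod_lt _ hnpos⟩ : Fin n) = ⟨0 % n, Nat.mod_lt _ hnpos⟩ := by
    simp [Fin.ext_iff]
  simp only [hmk]
lemma chi_odd {n : ℕ} (hn : 3 ≤ n) (ho : Odd n) : chi (djembeG n) = 4 :=
  chi_eq _ 4 (by norm_num) ⟨SimpleGraph.Coloring.mk (coV n) (fun h => co_proper hn h)⟩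
    (not_col3 hn ho)
lemma theta_sum {V : Type*} [Fintype V] {k : ℕ} (C : V → Fin k) :
    ∑ i, theta C i = Fintype.card V := by
  classical
  rw [Fintype.card]
  exact (Finset.card_eq_sum_card_fiberwise (f := C) (t := Finset.univ)
    (fun x _ => Finset.mem_univ _)).symm
lemma theta_center {n k : ℕ} (C : Option (Fin n × Bool) → Fin k)
    (hC : IsProperColoring (djembeG n) C) : theta C (C none) = 1 := by
  rw [theta]
  have : (Finset.univ.filter fun v => C v = C none) = {none} := by
    ext a
    cases a with
    | none => simp
    | some p =>
      simp only [Finset.mem_filter, Finset.mem_univ, true_and, Finset.mem_singleton]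
      constructor
      · intro h; exact absurd h.symm (hC (dj_adj_none p))
      · intro h; exact absurd h (by simp)
  rw [this, Finset.card_singleton]
lemma filter_subset_some {n k : ℕ} {C : Option (Fin n × Bool) → Fin k} {i : Fin k}
    (hC : IsProperColoring (djembeG n) C) (hi : i ≠ C none) :
    ∀ a ∈ Finset.univ.filter (fun v => C v = i), ∃ v b, a = some (v, b) := by
  intro a ha
  rw [Finset.mem_filter] at ha
  cases a with
  | none => exact absurd ha.2.symm hi
  | some p => exact ⟨p.1, p.2, by simp⟩
lemma theta_le {n k : ℕ} (hn : 3 ≤ n) (C : Option (Fin n × Bool) → Fin k)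
    (hC : IsProperColoring (djembeG n) C) (i : Fin k) : theta C i ≤ n := by
  by_cases hi : i = C none
  · rw [hi, theta_center C hC]; omega
  · rw [theta]
    have h0 : (0:ℕ) < n := by omega
    calc _ ≤ (Finset.univ : Finset (Fin n)).card := by
          apply Finset.card_le_card_of_injOn (fun a => (a.getD (⟨0, h0⟩, false)).1)
            (fun a _ => Finset.mem_univ _)
          intro a ha b hb hab
          simp only [Finset.coe_filter, Set.mem_setOf_eq] at ha hb
          obtain ⟨v, bv, rfl⟩ := filter_subset_some hC hi a (by simpa [Finset.mem_filter] using ha)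
          obtain ⟨w, bw, rfl⟩ := filter_subset_some hC hi b (by simpa [Finset.mem_filter] using hb)
          simp only [Option.getD_some] at hab
          cases hab
          by_cases hbb : bv = bw
          · rw [hbb]
          · have : bw = !bv := by cases bv <;> cases bw <;> simp_all
            subst this
            exact absurd (ha.2.trans hb.2.symm) (hC (dj_adj_rung v bv))
      _ = n := by simp
lemma theta_le_odd {n k : ℕ} (hn : 3 ≤ n) (ho : Odd n) (C : Option (Fin n × Bool) → Fin k)
    (hC : IsProperColoring (djembeG n) C) (i : Fin k) : theta C i ≤ n - 1 := by
  by_cases hi : i = C none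
  · rw [hi, theta_center C hC]; omega
  · by_contra hlt
    have hv : theta C i = n := le_antisymm (theta_le hn C hC i) (by omega)
    have h0 : (0:ℕ) < n := by omega
    set s := Finset.univ.filter (fun v => C v = i) with hs
    -- surjectivity of the first-projection map onto Fin n
    have hsurj : ∀ v : Fin n, ∃ b : Bool, C (some (v, b)) = i := by
      intro v
      have := Finset.surj_on_of_inj_on_of_card_le
        (s := s) (t := (Finset.univ : Finset (Fin n)))
        (fun a _ => (a.getD (⟨0, h0⟩, false)).1)
        (fun a ha => Finset.mem_univ _)
        ?_ ?_ v (Finset.mem_univ v)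
      · obtain ⟨a, ha, hav⟩ := this
        obtain ⟨w, bw, rfl⟩ := filter_subset_some hC hi a ha
        simp only [Option.getD_some] at hav
        subst hav
        exact ⟨bw, (Finset.mem_filter.mp ha).2⟩
      · intro a₁ a₂ ha₁ ha₂ hab
        obtain ⟨v₁, b₁, rfl⟩ := filter_subset_some hC hi a₁ ha₁
        obtain ⟨v₂, b₂, rfl⟩ := filter_subset_some hC hi a₂ ha₂
        simp only [Option.getD_some] at hab
        cases hab
        by_cases hbb : b₁ = b₂
        · rw [hbb]
        · have : b₂ = !b₁ := by cases b₁ <;> cases b₂ <;> simp_all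
          subst this
          exact absurd ((Finset.mem_filter.mp ha₁).2.trans
            (Finset.mem_filter.mp ha₂).2.symm) (hC (dj_adj_rung v₁ b₁))
      · rw [Finset.card_univ, Fintype.card_fin]
        have hsc : s.card = theta C i := rfl
        omega
    -- choose the boolean for each rung
    let f : Fin n → Bool := fun v => (hsurj v).choose
    have hf : ∀ v : Fin n, C (some (v, f v)) = i := fun v => (hsurj v).choose_spec
    have hflip : ∀ v w : Fin n, w.val = (v.val + 1) % n → f w ≠ f v := by
      intro v w hw hfe
      have hadj := dj_adj_cycle hn v w (f v) hw
      have h2 : C (some (w, f v)) = i := by rw [← hfe]; exact hf w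
      exact hC hadj ((hf v).trans h2.symm)
    have hbool : ∀ a b : Bool, a ≠ b → a = !b := by decide
    refine no_alt (fun m => f ⟨m % n, Nat.mod_lt _ h0⟩) (fun m => ?_) ho ?_
    · exact hbool _ _ (hflip _ _ (by simp [Nat.mod_add_mod]))
    · have hmk : (⟨n % n, Nat.mod_lt _ h0⟩ : Fin n) = ⟨0 % n, Nat.mod_lt _ h0⟩ := by
        simp [Fin.ext_iff]
      simp only [hmk]
lemma theta_pos_odd {n : ℕ} (hn : 3 ≤ n) (ho : Odd n) (C : Option (Fin n × Bool) → Fin 4)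
    (hC : IsProperColoring (djembeG n) C) (i : Fin 4) : 1 ≤ theta C i := by
  by_contra h
  have h0 : theta C i = 0 := by omega
  rw [theta, Finset.card_eq_zero, Finset.filter_eq_empty_iff] at h0
  have hne : ∀ v, C v ≠ i := fun v => h0 (Finset.mem_univ v)
  apply not_col3 hn ho
  refine ⟨SimpleGraph.Coloring.mk (fun v => (Fin.exists_succAbove_eq (hne v)).choose) ?_⟩
  intro v w hadj he
  apply hC hadj
  rw [← (Fin.exists_succAbove_eq (hne v)).choose_spec,
    ← (Fin.exists_succAbove_eq (hne w)).choose_spec]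
  exact congrArg _ he
lemma classSizesDesc_perm {V : Type*} [Fintype V] {k : ℕ} (C : V → Fin k) :
    (classSizesDesc C).Perm (List.ofFn fun i => theta C i) :=
  (List.reverse_perm _).trans (List.perm_insertionSort _ _)
lemma classSizesDesc_prod {V : Type*} [Fintype V] {k : ℕ} (C : V → Fin k) :
    (classSizesDesc C).prod = ∏ i, theta C i := by
  rw [(classSizesDesc_perm C).prod_eq, List.prod_ofFn]
lemma classSizesDesc_sum {V : Type*} [Fintype V] {k : ℕ} (C : V → Fin k) :
    (classSizesDesc C).sum = ∑ i, theta C i := by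
  rw [(classSizesDesc_perm C).sum_eq, List.sum_ofFn]
lemma classSizesDesc_length {V : Type*} [Fintype V] {k : ℕ} (C : V → Fin k) :
    (classSizesDesc C).length = k := by
  simp [classSizesDesc]
lemma classSizesDesc_mem {V : Type*} [Fintype V] {k : ℕ} (C : V → Fin k) {x : ℕ}
    (hx : x ∈ classSizesDesc C) : ∃ i, theta C i = x := by
  rw [(classSizesDesc_perm C).mem_iff, List.mem_ofFn] at hx
  exact hx
lemma classSizesDesc_sorted {V : Type*} [Fintype V] {k : ℕ} (C : V → Fin k) :
    (classSizesDesc C).Pairwise (· ≥ ·) := by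
  rw [classSizesDesc, List.pairwise_reverse]
  exact List.pairwise_insertionSort (· ≤ ·) _
lemma classSizesDesc_cast {V : Type*} [Fintype V] {k m : ℕ} (h : k = m) (C : V → Fin k) :
    classSizesDesc (fun v => Fin.cast h (C v)) = classSizesDesc C := by
  subst h; rfl
lemma lex_even_bound {l : List ℕ} {n : ℕ} (hlen : l.length = 3)
    (hmem : ∀ x ∈ l, x ≤ n) (hsum : l.sum = 2*n+1) :
    l = [n, n, 1] ∨ List.Lex (· < ·) l [n, n, 1] := by
  obtain ⟨a, b, c, rfl⟩ := List.length_eq_three.mp hlen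
  have ha : a ≤ n := hmem a (by simp)
  have hb : b ≤ n := hmem b (by simp)
  simp only [List.sum_cons, List.sum_nil] at hsum
  rcases Nat.lt_or_ge a n with h | h
  · exact Or.inr (List.Lex.rel h)
  · have ha' : a = n := by omega
    subst ha'
    rcases Nat.lt_or_ge b a with h2 | h2
    · exact Or.inr (List.Lex.cons (List.Lex.rel h2))
    · have hb' : b = a := by omega
      subst hb'
      have : c = 1 := by omega
      subst this
      exact Or.inl rfl
lemma lex_odd_bound {l : List ℕ} {n : ℕ} (hn : 3 ≤ n) (hlen : l.length = 4)
    (hmem : ∀ x ∈ l, x ≤ n - 1) (hpos : ∀ x ∈ l, 1 ≤ x)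
    (hsorted : l.Pairwise (· ≥ ·)) (hsum : l.sum = 2*n+1) :
    l = [n-1, n-1, 2, 1] ∨ List.Lex (· < ·) l [n-1, n-1, 2, 1] := by
  rcases l with _ | ⟨a, _ | ⟨b, _ | ⟨c, _ | ⟨d, _ | ⟨e, t⟩⟩⟩⟩⟩ <;> simp at hlen
  have ha : a ≤ n - 1 := hmem a (by simp)
  have hb : b ≤ n - 1 := hmem b (by simp)
  have hd : 1 ≤ d := hpos d (by simp)
  have hcd : c ≥ d := by
    simp only [List.pairwise_cons] at hsorted
    exact hsorted.2.2.1 d (by simp)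
  simp only [List.sum_cons, List.sum_nil] at hsum
  rcases Nat.lt_or_ge a (n-1) with h | h
  · exact Or.inr (List.Lex.rel h)
  · have ha' : a = n - 1 := by omega
    subst ha'
    rcases Nat.lt_or_ge b (n-1) with h2 | h2
    · exact Or.inr (List.Lex.cons (List.Lex.rel h2))
    · have hb' : b = n - 1 := by omega
      subst hb'
      have hc : c = 2 ∧ d = 1 := by omega
      rw [hc.1, hc.2]
      exact Or.inl rfl
lemma sort3 {a : ℕ} (ha : 2 ≤ a) :
    (List.insertionSort (· ≤ ·) [a, a, 1]).reverse = [a, a, 1] := by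
  have h1 : ¬ (a ≤ 1) := by omega
  simp [List.insertionSort, List.orderedInsert, h1]
lemma sort4 {a : ℕ} (ha : 2 ≤ a) :
    (List.insertionSort (· ≤ ·) [a, a, 2, 1]).reverse = [a, a, 2, 1] := by
  have h1 : ¬ (a ≤ 1) := by omega
  rcases Nat.lt_or_ge a 3 with h | h
  · have : a = 2 := by omega
    subst this
    decide
  · have h2 : ¬ (a ≤ 2) := by omega
    simp [List.insertionSort, List.orderedInsert, h1, h2]
lemma ofFn_three (g : Fin 3 → ℕ) : List.ofFn g = [g 0, g 1, g 2] := rfl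
lemma ofFn_four (g : Fin 4 → ℕ) : List.ofFn g = [g 0, g 1, g 2, g 3] := rfl
lemma card_djembe (n : ℕ) : Fintype.card (Option (Fin n × Bool)) = 2*n+1 := by
  simp [Fintype.card_option, Fintype.card_prod]
  omega
lemma cast_proper {n k m : ℕ} (h : k = m) {C : Option (Fin n × Bool) → Fin k}
    (hC : IsProperColoring (djembeG n) C) :
    IsProperColoring (djembeG n) (fun v => Fin.cast h (C v)) := by
  intro v w hadj hEq
  exact hC hadj (by simpa [Fin.ext_iff] using hEq)
lemma desc_ceV {n : ℕ} (hn : 3 ≤ n) (he : Even n) :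
    classSizesDesc (ceV n) = [n, n, 1] := by
  have hp := ce_proper hn he
  have t2 : theta (ceV n) 2 = 1 := theta_center (ceV n) hp
  have hsum := theta_sum (ceV n)
  rw [card_djembe, Fin.sum_univ_three] at hsum
  have b0 := theta_le hn _ hp 0
  have b1 := theta_le hn _ hp 1
  have t0 : theta (ceV n) 0 = n := by omega
  have t1 : theta (ceV n) 1 = n := by omega
  rw [classSizesDesc, ofFn_three, t0, t1, t2, sort3 (by omega)]
lemma desc_coV {n : ℕ} (hn : 3 ≤ n) (ho : Odd n) :
    classSizesDesc (coV n) = [n-1, n-1, 2, 1] := by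
  have hp := co_proper hn
  have t3 : theta (coV n) 3 = 1 := theta_center (coV n) hp
  have hn1 : (0:ℕ) < n := by omega
  have t2 : theta (coV n) 2 = 2 := by
    rw [theta]
    have hset : Finset.univ.filter (fun v => coV n v = 2) =
        {some (⟨n-1, by omega⟩, false), some (⟨n-2, by omega⟩, true)} := by
      ext a
      simp only [Finset.mem_filter, Finset.mem_univ, true_and, Finset.mem_insert,
        Finset.mem_singleton]
      rcases a with _ | ⟨v, _ | _⟩
      · simp [coV, Fin.ext_iff]
      · -- b = false
        simp only [coV, Option.some_inj, Prod.mk.injEq, Fin.ext_iff]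
        split_ifs with h <;> simp <;> omega
      · simp only [coV, Option.some_inj, Prod.mk.injEq, Fin.ext_iff]
        split_ifs with h h2 <;> simp <;> omega
    rw [hset, Finset.card_insert_of_notMem (by simp), Finset.card_singleton]
  have hsum := theta_sum (coV n)
  rw [card_djembe, Fin.sum_univ_four] at hsum
  have b0 := theta_le_odd hn ho _ hp 0
  have b1 := theta_le_odd hn ho _ hp 1
  have t0 : theta (coV n) 0 = n - 1 := by omega
  have t1 : theta (coV n) 1 = n - 1 := by omega
  rw [classSizesDesc, ofFn_four, t0, t1, t2, t3, sort4 (by omega)]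
lemma main_even {n : ℕ} (hn : 3 ≤ n) (he : Even n)
    (C : Option (Fin n × Bool) → Fin (chi (djembeG n)))
    (hC : IsChiMinusColoring (djembeG n) C) :
    ∏ i, theta C i = n ^ 2 := by
  have hchi := chi_even hn he
  set C' : Option (Fin n × Bool) → Fin 3 := fun v => Fin.cast hchi (C v) with hC'
  have hC'p : IsProperColoring (djembeG n) C' := cast_proper hchi hC.1
  have hdesc : classSizesDesc C' = classSizesDesc C := classSizesDesc_cast hchi C
  -- upper bound
  have hlen : (classSizesDesc C').length = 3 := classSizesDesc_length C'
  have hmem : ∀ x ∈ classSizesDesc C', x ≤ n := by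
    intro x hx
    obtain ⟨i, hi⟩ := classSizesDesc_mem C' hx
    exact hi ▸ theta_le hn C' hC'p i
  have hsum : (classSizesDesc C').sum = 2*n+1 := by
    rw [classSizesDesc_sum, theta_sum, card_djembe]
  rcases lex_even_bound hlen hmem hsum with heq | hlex
  · have hprod := classSizesDesc_prod C
    rw [← hdesc, heq] at hprod
    simp only [List.prod_cons, List.prod_nil] at hprod
    rw [← hprod]; ring
  · exfalso
    refine hC.2 (fun v => Fin.cast hchi.symm (ceV n v)) (cast_proper hchi.symm (ce_proper hn he)) ?_
    rw [classSizesDesc_cast hchi.symm (ceV n), desc_ceV hn he, ← hdesc]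
    exact hlex
lemma main_odd {n : ℕ} (hn : 3 ≤ n) (ho : Odd n)
    (C : Option (Fin n × Bool) → Fin (chi (djembeG n)))
    (hC : IsChiMinusColoring (djembeG n) C) :
    ∏ i, theta C i = 2 * (n - 1) ^ 2 := by
  have hchi := chi_odd hn ho
  set C' : Option (Fin n × Bool) → Fin 4 := fun v => Fin.cast hchi (C v) with hC'
  have hC'p : IsProperColoring (djembeG n) C' := cast_proper hchi hC.1
  have hdesc : classSizesDesc C' = classSizesDesc C := classSizesDesc_cast hchi C
  have hlen : (classSizesDesc C').length = 4 := classSizesDesc_length C'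
  have hmem : ∀ x ∈ classSizesDesc C', x ≤ n - 1 := by
    intro x hx
    obtain ⟨i, hi⟩ := classSizesDesc_mem C' hx
    exact hi ▸ theta_le_odd hn ho C' hC'p i
  have hpos : ∀ x ∈ classSizesDesc C', 1 ≤ x := by
    intro x hx
    obtain ⟨i, hi⟩ := classSizesDesc_mem C' hx
    exact hi ▸ theta_pos_odd hn ho C' hC'p i
  have hsum : (classSizesDesc C').sum = 2*n+1 := by
    rw [classSizesDesc_sum, theta_sum, card_djembe]
  rcases lex_odd_bound hn hlen hmem hpos (classSizesDesc_sorted C') hsum with heq | hlex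
  · have hprod := classSizesDesc_prod C
    rw [← hdesc, heq] at hprod
    simp only [List.prod_cons, List.prod_nil] at hprod
    rw [← hprod]; ring
  · exfalso
    refine hC.2 (fun v => Fin.cast hchi.symm (coV n v)) (cast_proper hchi.symm (co_proper hn)) ?_
    rw [classSizesDesc_cast hchi.symm (coV n), desc_coV hn ho, ← hdesc]
    exact hlex

theorem djembeGraph_chromaticCompoundCurlingNumber (n : ℕ) (hn : 3 ≤ n)
    (C : Option (Fin n × Bool) → Fin (chi (djembeG n)))
    (hC : IsChiMinusColoring (djembeG n) C) :
    ∏ i, theta C i = if Even n then n ^ 2 else 2 * (n - 1) ^ 2 := by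
  rcases Nat.even_or_odd n with he | ho
  · rw [if_pos he]; exact main_even hn he C hC
  · rw [if_neg (Nat.not_even_iff_odd.mpr ho)]; exact main_odd hn ho C hC
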